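/- Let N ≥ 2, M ≥ 2 and let (p_1,...,p_N) be a probability vector with all p_i > 0 satisfying ∏ p_i^{-p_i} ≤ M ≤ (∏ p_i)^{-1/N}. Let λ ∈ [0,1] satisfy ∑_{i=1}^N p_i^λ log(M p_i) = 0, and set α_i = p_i^λ / ∑_{j=1}^N p_j^λ. Then (α_1,...,α_N) is a probability vector satisfying ∑_{i=1}^N α_i log p_i = -log M, and for any probability vector (β_1,...,β_N) with ∑_{i=1}^N β_i log p_i = -log M, one has -∑_{i=1}^N β_i log β_i ≤ -∑_{i=1}^N α_i log α_i = λ log M + log(∑_{i=1}^N p_i^λ). -/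

import Mathlib

/-!
The escort distribution `α ∝ p ^ λ` is an exponential family in the statistic `log p`, so
`log α i = λ log p i - log ∑ p ^ λ` and the cross entropy `∑ β log α` of any probability vector `β`
depends on `β` only through `∑ β log p`. Under the constraint `∑ β log p = -log M`, which `α`
itself satisfies by the choice of `λ`, it therefore equals `∑ α log α`, and Gibbs' inequality
`∑ β log α ≤ ∑ β log β` gives the maximality of the entropy of `α`.
-/

open Finset Real

lemma mul_log_sub_mul_log_le_sub {a b : ℝ} (ha : 0 < a) (hb : 0 ≤ b) :
    b * log a - b * log b ≤ a - b := by
  rcases hb.eq_or_lt with rfl | hb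
  · simpa using ha.le
  calc b * log a - b * log b = b * log (a / b) := by rw [log_div ha.ne' hb.ne']; ring
    _ ≤ b * (a / b - 1) := by gcongr; exact log_le_sub_one_of_pos (by positivity)
    _ = a - b := by field_simp

section Gibbs

variable {ι : Type*} [Fintype ι]

lemma sum_mul_log_le_sum_mul_log {q w : ι → ℝ} (hq : ∀ i, 0 < q i) (hw : ∀ i, 0 ≤ w i)
    (hsum : ∑ i, q i ≤ ∑ i, w i) :
    ∑ i, w i * log (q i) ≤ ∑ i, w i * log (w i) := by
  have : ∑ i, (w i * log (q i) - w i * log (w i)) ≤ ∑ i, (q i - w i) :=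
    sum_le_sum fun i _ ↦ mul_log_sub_mul_log_le_sub (hq i) (hw i)
  rw [sum_sub_distrib, sum_sub_distrib] at this
  linarith

end Gibbs

section Escort

variable {ι : Type*} [Fintype ι] {p : ι → ℝ}

noncomputable def escort (p : ι → ℝ) (l : ℝ) (i : ι) : ℝ := p i ^ l / ∑ j, p j ^ l

variable [Nonempty ι] (hp : ∀ i, 0 < p i) (l : ℝ)
include hp

lemma sum_rpow_pos : 0 < ∑ j, p j ^ l :=
  sum_pos (fun i _ ↦ rpow_pos_of_pos (hp i) l) univ_nonempty

lemma escort_pos (i : ι) : 0 < escort p l i :=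
  div_pos (rpow_pos_of_pos (hp i) l) (sum_rpow_pos hp l)

lemma sum_escort : ∑ i, escort p l i = 1 := by
  simp only [escort]
  rw [← sum_div, div_self (sum_rpow_pos hp l).ne']

lemma log_escort (i : ι) : log (escort p l i) = l * log (p i) - log (∑ j, p j ^ l) := by
  rw [escort, log_div (rpow_pos_of_pos (hp i) l).ne' (sum_rpow_pos hp l).ne', log_rpow (hp i)]

lemma sum_mul_log_escort {w : ι → ℝ} (hw : ∑ i, w i = 1) :
    ∑ i, w i * log (escort p l i) = l * ∑ i, w i * log (p i) - log (∑ j, p j ^ l) := by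
  simp_rw [log_escort hp, mul_sub, sum_sub_distrib, ← sum_mul, hw, one_mul, mul_sum]
  congr 1
  exact sum_congr rfl fun _ _ ↦ by ring

lemma sum_escort_mul_log_eq_neg_log {M : ℝ} (hM : 0 < M)
    (hroot : ∑ i, p i ^ l * log (M * p i) = 0) :
    ∑ i, escort p l i * log (p i) = -log M := by
  simp_rw [log_mul hM.ne' (hp _).ne', mul_add, sum_add_distrib, ← sum_mul] at hroot
  simp_rw [escort, div_mul_eq_mul_div, ← sum_div]
  have hS := (sum_rpow_pos hp l).ne'
  field_simp
  linarith

end Escort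

theorem entropy_maximization
    (N M : ℕ) (hN : 2 ≤ N) (hM : 2 ≤ M) (p : Fin N → ℝ)
    (hpos : ∀ i, 0 < p i)
    (l : ℝ)
    (hroot : ∑ i, (p i) ^ l * Real.log (M * p i) = 0)
    (α : Fin N → ℝ) (hα : ∀ i, α i = (p i) ^ l / ∑ j, (p j) ^ l) :
    (∀ i, 0 ≤ α i) ∧ (∑ i, α i = 1) ∧
    (∑ i, α i * Real.log (p i) = -Real.log M) ∧
    (∀ β : Fin N → ℝ, (∀ i, 0 ≤ β i) → (∑ i, β i = 1) →
      (∑ i, β i * Real.log (p i) = -Real.log M) →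
      -∑ i, β i * Real.log (β i) ≤ -∑ i, α i * Real.log (α i)) ∧
    -∑ i, α i * Real.log (α i)
      = l * Real.log M + Real.log (∑ i, (p i) ^ l) := by
  have : Nonempty (Fin N) := ⟨⟨0, by omega⟩⟩
  obtain rfl : α = escort p l := funext hα
  have hαsum := sum_escort hpos l
  have hM0 : (0 : ℝ) < M := by exact_mod_cast (by omega : 0 < M)
  have hconstraint := sum_escort_mul_log_eq_neg_log hpos l hM0 hroot
  have hentropy := sum_mul_log_escort hpos l hαsum
  rw [hconstraint] at hentropy
  refine ⟨fun i ↦ (escort_pos hpos l i).le, hαsum, hconstraint, ?_, by linarith⟩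
  intro β hβ hβsum hβconstraint
  have hgibbs := sum_mul_log_le_sum_mul_log (escort_pos hpos l) hβ (by rw [hαsum, hβsum])
  rw [sum_mul_log_escort hpos l hβsum, hβconstraint] at hgibbs
  linarith
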